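/- arXiv:2010.15451 — 2 statements merged into one kernel-verified Lean document; each statement's English description precedes it below -/
import Mathlib

section
/- Let 1 < p < ∞ and let (g_j) be a sequence in an L^p space with ‖g_j‖ ≍ 1 uniformly, such that g_j → φ in norm with ‖φ‖ > 0 and ‖φ − g_j‖ ≤ 2^{−j}. If (a_j) is a nonnegative sequence with (a_j) ∈ ℓ^{p'} but Σ a_j = ∞ (p' the conjugate exponent), then Σ_j a_j g_j cannot converge in L^p whenever the g_j have pairwise disjoint supports; more precisely, the partial sums of Σ_j a_j φ diverge pointwise on a set of positive measure while Σ_j a_j (φ − g_j) converges absolutely in L^p norm. -/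
open MeasureTheory Filter
open scoped ENNReal

/-! The correction series is controlled by Hölder's inequality in `ℓ^{p'} × ℓ^p`: `(a_j) ∈ ℓ^{p'}`
and `‖φ - g_j‖ ≤ 2^{-j}` is summable, hence in `ℓ^p`. The series `Σ a_j φ(x)` diverges wherever
`φ(x) ≠ 0`, and that set has positive measure because `φ` has nonzero `L^p` norm. -/

lemma summable_two_rpow_neg_natCast : Summable fun j : ℕ => (2 : ℝ) ^ (-(j : ℝ)) := by
  simpa [Real.rpow_neg, Real.rpow_natCast] using summable_geometric_two

lemma Summable.rpow_of_one_le {ι : Type*} {t : ι → ℝ} {p : ℝ} (ht₀ : ∀ i, 0 ≤ t i)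
    (ht : Summable t) (hp : 1 ≤ p) : Summable fun i => t i ^ p := by
  have h_le_one : ∀ᶠ i in cofinite, t i ≤ 1 :=
    ht.tendsto_cofinite_zero.eventually (eventually_le_nhds one_pos)
  refine ht.of_norm_bounded_eventually (h_le_one.mono fun i hi => ?_)
  rw [Real.norm_of_nonneg (Real.rpow_nonneg (ht₀ i) p)]
  exact Real.rpow_le_self_of_le_one (ht₀ i) hi hp

lemma measure_support_pos_of_eLpNorm_pos {α : Type*} [MeasurableSpace α] {μ : Measure α}
    {p : ℝ≥0∞} {f : α → ℝ} (hf : 0 < eLpNorm f p μ) : 0 < μ (Function.support f) := by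
  refine pos_iff_ne_zero.mpr fun h_null => hf.ne' ?_
  have hf_ae : f =ᵐ[μ] 0 := by
    rwa [EventuallyEq, ae_iff]
  rw [eLpNorm_congr_ae hf_ae, eLpNorm_zero]

theorem disjoint_supports_divergence_general {α : Type*} [MeasurableSpace α] (μ : Measure α)
    (p : ℝ) (hp : 1 < p) (g : ℕ → α → ℝ) (φ : α → ℝ) (a : ℕ → ℝ)
    (hφpos : 0 < eLpNorm φ (ENNReal.ofReal p) μ)
    (hclose : ∀ j, eLpNorm (fun x => φ x - g j x) (ENNReal.ofReal p) μ
      ≤ ENNReal.ofReal (2 ^ (-(j : ℝ))))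
    (ha : ∀ j, 0 ≤ a j)
    (hap : Summable fun j => a j ^ (p / (p - 1)))
    (hasum : ¬ Summable a) :
    (Summable fun j =>
      a j * (eLpNorm (fun x => φ x - g j x) (ENNReal.ofReal p) μ).toReal) ∧
    0 < μ {x | ¬ Summable fun j => a j * φ x} := by
  set t : ℕ → ℝ := fun j => (eLpNorm (fun x => φ x - g j x) (ENNReal.ofReal p) μ).toReal
  have ht₀ : ∀ j, 0 ≤ t j := fun j => ENNReal.toReal_nonneg
  have ht : Summable t :=
    summable_two_rpow_neg_natCast.of_nonneg_of_le ht₀ fun j =>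
      ENNReal.toReal_le_of_le_ofReal (by positivity) (hclose j)
  refine ⟨Real.summable_mul_of_Lp_Lq_of_nonneg (Real.HolderConjugate.conjExponent hp).symm ha ht₀
    hap (ht.rpow_of_one_le ht₀ hp.le), ?_⟩
  refine (measure_support_pos_of_eLpNorm_pos hφpos).trans_le (measure_mono fun x hx => ?_)
  exact fun h_sum => hasum ((summable_mul_right_iff hx).mp h_sum)

/-- The functional-analytic core of the compactness contradiction: if (g_j) are
disjointly supported, normalized in L^p, converge to φ ≠ 0 with ‖φ - g_j‖ ≤ 2^(-j),
and (a_j) is a nonnegative ℓ^(p') sequence with Σ a_j = ∞, then Σ a_j (φ - g_j)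
converges absolutely in L^p norm, while Σ a_j φ(x) diverges on a set of positive
measure. -/
theorem disjoint_supports_divergence {α : Type*} [MeasurableSpace α] (μ : Measure α)
    (p : ℝ) (hp : 1 < p) (g : ℕ → α → ℝ) (φ : α → ℝ) (a : ℕ → ℝ) (c₁ c₂ : ℝ)
    (hg : ∀ j, MemLp (g j) (ENNReal.ofReal p) μ)
    (hφ : MemLp φ (ENNReal.ofReal p) μ)
    (hc₁ : 0 < c₁)
    (hlow : ∀ j, ENNReal.ofReal c₁ ≤ eLpNorm (g j) (ENNReal.ofReal p) μ)
    (hup : ∀ j, eLpNorm (g j) (ENNReal.ofReal p) μ ≤ ENNReal.ofReal c₂)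
    (hφpos : 0 < eLpNorm φ (ENNReal.ofReal p) μ)
    (hclose : ∀ j, eLpNorm (fun x => φ x - g j x) (ENNReal.ofReal p) μ
      ≤ ENNReal.ofReal (2 ^ (-(j : ℝ))))
    (hdisj : Pairwise fun i j => ∀ᵐ x ∂μ, g i x = 0 ∨ g j x = 0)
    (ha : ∀ j, 0 ≤ a j)
    (hap : Summable fun j => a j ^ (p / (p - 1)))
    (hasum : ¬ Summable a) :
    (Summable fun j =>
      a j * (eLpNorm (fun x => φ x - g j x) (ENNReal.ofReal p) μ).toReal) ∧
    0 < μ {x | ¬ Summable fun j => a j * φ x} :=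
  disjoint_supports_divergence_general μ p hp g φ a hφpos hclose ha hap hasum
end

section
/- If T is a Calderón–Zygmund operator on ℝᵈ whose kernel K satisfies the non-degeneracy condition (there exist c₀, C₀ > 0 such that for every x and r > 0, there is y with r ≤ |x−y| ≤ C₀ r and |K(x,y)| ≥ 1/(c₀ rᵈ)), then there exist constants 3 ≤ A₁ ≤ A₂ such that for every ball B = B(x₀, r) there is a ball B̃ = B(y₀, r) with A₁ r ≤ |x₀ − y₀| ≤ A₂ r, on which K(x,y) does not change sign for (x,y) ∈ B × B̃ and satisfies |K(x,y)| ≳ r^{−d} there. -/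
open MeasureTheory Metric Set Filter
open scoped ENNReal NNReal Topology

noncomputable section

abbrev Ed (d : ℕ) := EuclideanSpace ℝ (Fin d)

/-- A weight: a.e. positive and locally integrable. -/
def IsWeight {d : ℕ} (ν : Ed d → ℝ) : Prop :=
  (∀ᵐ x, 0 < ν x) ∧ LocallyIntegrable ν

/-- The Muckenhoupt A_p condition over balls. -/
def IsAp {d : ℕ} (p : ℝ) (w : Ed d → ℝ) : Prop :=
  IsWeight w ∧ ∃ C : ℝ, ∀ (x : Ed d) (r : ℝ), 0 < r →
    (⨍ y in ball x r, w y) *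
      (⨍ y in ball x r, w y ^ (-(1 / (p - 1)))) ^ (p - 1) ≤ C

/-- Weighted mean oscillation of b over a set B: (1/ν(B)) ∫_B |b - b_B|. -/
def oscW {d : ℕ} (ν b : Ed d → ℝ) (B : Set (Ed d)) : ℝ :=
  (∫ x in B, |b x - ⨍ y in B, b y|) / (∫ x in B, ν x)

/-- The ν-weighted BMO condition. -/
def MemBMOW {d : ℕ} (ν b : Ed d → ℝ) : Prop :=
  LocallyIntegrable b ∧ ∃ C : ℝ, ∀ (x : Ed d) (r : ℝ), 0 < r → oscW ν b (ball x r) ≤ C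

/-- The ν-weighted VMO condition: BMO plus vanishing normalized oscillation at small
scales, at large scales, and at infinity. -/
def MemVMOW {d : ℕ} (ν b : Ed d → ℝ) : Prop :=
  MemBMOW ν b ∧
  (∀ ε > (0:ℝ), ∃ a > (0:ℝ), ∀ (x : Ed d) (r : ℝ), 0 < r → r ≤ a →
    oscW ν b (ball x r) ≤ ε) ∧
  (∀ ε > (0:ℝ), ∃ a > (0:ℝ), ∀ (x : Ed d) (r : ℝ), a ≤ r →
    oscW ν b (ball x r) ≤ ε) ∧
  (∀ ε > (0:ℝ), ∃ a > (0:ℝ), ∀ (x : Ed d) (r : ℝ), 0 < r →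
    Disjoint (ball x r) (ball (0 : Ed d) a) → oscW ν b (ball x r) ≤ ε)

/-- The size and δ-Hölder smoothness conditions for a standard CZ kernel. -/
def IsStandardKernel {d : ℕ} (K : Ed d → Ed d → ℝ) (CK δ : ℝ) : Prop :=
  0 < δ ∧ δ ≤ 1 ∧
  (∀ x y, x ≠ y → |K x y| ≤ CK / dist x y ^ d) ∧
  (∀ x y h : Ed d, 0 < ‖h‖ → 2 * ‖h‖ < dist x y →
    |K (x + h) y - K x y| + |K x (y + h) - K x y|
      ≤ CK * ‖h‖ ^ δ / dist x y ^ ((d : ℝ) + δ))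

/-- The non-degeneracy condition on a kernel. -/
def IsNonDegenerate {d : ℕ} (K : Ed d → Ed d → ℝ) (c₀ C₀ : ℝ) : Prop :=
  0 < c₀ ∧ 0 < C₀ ∧ ∀ (x : Ed d) (r : ℝ), 0 < r →
    ∃ y : Ed d, r ≤ dist x y ∧ dist x y ≤ C₀ * r ∧ 1 / (c₀ * r ^ d) ≤ |K x y|

/-- T is an L²-bounded operator with kernel K off the support. -/
def IsCZOperator {d : ℕ} (T : (Ed d → ℝ) → (Ed d → ℝ)) (K : Ed d → Ed d → ℝ) : Prop :=
  (∀ (f g : Ed d → ℝ) (α β : ℝ),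
    T (fun x => α * f x + β * g x) = fun x => α * T f x + β * T g x) ∧
  (∃ C : ℝ, ∀ f : Ed d → ℝ, MemLp f 2 volume →
    eLpNorm (T f) 2 volume ≤ ENNReal.ofReal C * eLpNorm f 2 volume) ∧
  (∀ f : Ed d → ℝ, Integrable f → HasCompactSupport f → ∀ x ∉ tsupport f,
    T f x = ∫ y, K x y * f y)

/-- The measure with density w with respect to Lebesgue measure, i.e. L^p(w). -/
def wMeasure {d : ℕ} (w : Ed d → ℝ) : Measure (Ed d) :=
  volume.withDensity fun x => ENNReal.ofReal (w x)

/-- The bComm [b,T] f = b · Tf − T(bf). -/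
def bComm {d : ℕ} (b : Ed d → ℝ) (T : (Ed d → ℝ) → (Ed d → ℝ))
    (f : Ed d → ℝ) : Ed d → ℝ :=
  fun x => b x * T f x - T (fun y => b y * f y) x

/-- Sequential compactness of the bComm [b,T] from L^p(σ) to L^p(λ): every
bounded sequence in L^p(σ) has a subsequence whose images are Cauchy in L^p(λ). -/
def CompactCommutator {d : ℕ} (b : Ed d → ℝ) (T : (Ed d → ℝ) → (Ed d → ℝ))
    (p : ℝ) (σw lw : Ed d → ℝ) : Prop :=
  ∀ f : ℕ → Ed d → ℝ,
    (∀ n, MemLp (f n) (ENNReal.ofReal p) (wMeasure σw)) →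
    (∀ n, eLpNorm (f n) (ENNReal.ofReal p) (wMeasure σw) ≤ 1) →
    ∃ φ : ℕ → ℕ, StrictMono φ ∧ ∀ ε > (0:ℝ), ∃ N : ℕ, ∀ m ≥ N, ∀ n ≥ N,
      eLpNorm (fun x => bComm b T (f (φ m)) x - bComm b T (f (φ n)) x)
        (ENNReal.ofReal p) (wMeasure lw) ≤ ENNReal.ofReal ε

/-!
Apply the non-degeneracy condition at the scale `A r`: it gives `y₀` with `A r ≤ |x₀ - y₀| ≤ C₀ A r`
and `|K(x₀, y₀)| ≥ 1 / (c₀ (A r)ᵈ)`. By Hölder smoothness in each variable, `K` oscillates on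
`B(x₀, r) × B(y₀, r)` by at most `≲ r^δ / (A r)^(d + δ) = A^(-δ) (A r)^(-d)`, which for `A` large is
at most half of `|K(x₀, y₀)|`; so `K` keeps the sign of `K(x₀, y₀)` there and has size `≳ r^(-d)`.
-/

namespace IsStandardKernel

variable {d : ℕ} {K : Ed d → Ed d → ℝ} {CK δ : ℝ}

theorem mono (hK : IsStandardKernel K CK δ) {CK' : ℝ} (hle : CK ≤ CK') :
    IsStandardKernel K CK' δ := by
  obtain ⟨hδ, hδ1, hsize, hsmooth⟩ := hK
  refine ⟨hδ, hδ1, fun x y hxy => (hsize x y hxy).trans ?_,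
    fun x y h hh hxy => (hsmooth x y h hh hxy).trans ?_⟩
  · gcongr
  · gcongr

theorem abs_sub_le_left (hK : IsStandardKernel K CK δ) {x x' y : Ed d}
    (hx : 2 * dist x' x < dist x y) :
    |K x' y - K x y| ≤ CK * dist x' x ^ δ / dist x y ^ ((d : ℝ) + δ) := by
  obtain ⟨hδ, -, -, hsmooth⟩ := hK
  rcases eq_or_ne x' x with rfl | hne
  · simp [Real.zero_rpow hδ.ne']
  have h := hsmooth x y (x' - x) (norm_pos_iff.mpr (sub_ne_zero.mpr hne))
    (by rwa [← dist_eq_norm])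
  rw [add_sub_cancel, ← dist_eq_norm] at h
  exact (le_add_of_nonneg_right (abs_nonneg _)).trans h

theorem abs_sub_le_right (hK : IsStandardKernel K CK δ) {x y y' : Ed d}
    (hy : 2 * dist y' y < dist x y) :
    |K x y' - K x y| ≤ CK * dist y' y ^ δ / dist x y ^ ((d : ℝ) + δ) := by
  obtain ⟨hδ, -, -, hsmooth⟩ := hK
  rcases eq_or_ne y' y with rfl | hne
  · simp [Real.zero_rpow hδ.ne']
  have h := hsmooth x y (y' - y) (norm_pos_iff.mpr (sub_ne_zero.mpr hne))
    (by rwa [← dist_eq_norm])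
  rw [add_sub_cancel, ← dist_eq_norm] at h
  exact (le_add_of_nonneg_left (abs_nonneg _)).trans h

/-- `3 ≤ A` puts both `x₀` and `x` at distance `> 2 r` from `y₀`, so that smoothness applies in
each variable. -/
theorem abs_sub_le_of_mem_ball (hK : IsStandardKernel K CK δ) (hCK : 0 ≤ CK)
    {A r : ℝ} (hr : 0 < r) (hA : 3 ≤ A) {x₀ y₀ x y : Ed d} (hxy : A * r ≤ dist x₀ y₀)
    (hx : x ∈ ball x₀ r) (hy : y ∈ ball y₀ r) :
    |K x y - K x₀ y₀| ≤ 2 ^ (d + 1) * CK / (A / 2) ^ δ / (A * r) ^ d := by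
  have hδ : 0 < δ := hK.1
  rw [mem_ball] at hx hy
  have htri : dist x₀ y₀ ≤ dist x x₀ + dist x y₀ := dist_comm x x₀ ▸ dist_triangle _ _ _
  have hAr : 3 * r ≤ A * r := mul_le_mul_of_nonneg_right hA hr.le
  have hterm : ∀ {a b : ℝ}, 0 ≤ a → a < r → A / 2 * r ≤ b →
      CK * a ^ δ / b ^ ((d : ℝ) + δ) ≤ CK * r ^ δ / (A / 2 * r) ^ ((d : ℝ) + δ) :=
    fun ha har hb => by gcongr
  have hscale : (A / 2 * r) ^ ((d : ℝ) + δ) = (A / 2) ^ δ * r ^ δ * ((A * r) ^ d / 2 ^ d) := by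
    rw [Real.rpow_add (by positivity), Real.rpow_natCast, Real.mul_rpow (by positivity) hr.le,
      show A / 2 * r = A * r / 2 by ring, div_pow]
    ring
  calc |K x y - K x₀ y₀| ≤ |K x y - K x y₀| + |K x y₀ - K x₀ y₀| := abs_sub_le _ _ _
    _ ≤ CK * dist y y₀ ^ δ / dist x y₀ ^ ((d : ℝ) + δ)
          + CK * dist x x₀ ^ δ / dist x₀ y₀ ^ ((d : ℝ) + δ) :=
        add_le_add (hK.abs_sub_le_right (by linarith)) (hK.abs_sub_le_left (by linarith))
    _ ≤ CK * r ^ δ / (A / 2 * r) ^ ((d : ℝ) + δ) + CK * r ^ δ / (A / 2 * r) ^ ((d : ℝ) + δ) :=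
        add_le_add (hterm dist_nonneg hy (by linarith)) (hterm dist_nonneg hx (by linarith))
    _ = 2 ^ (d + 1) * CK / (A / 2) ^ δ / (A * r) ^ d := by
        rw [hscale]
        field_simp
        ring

end IsStandardKernel

theorem le_or_le_neg_of_abs_sub_le {α β : Type*} {f : α → β → ℝ} {s : Set α} {t : Set β}
    {a ε : ℝ} (ha : 2 * ε ≤ |a|) (hf : ∀ x ∈ s, ∀ y ∈ t, |f x y - a| ≤ ε) :
    (∀ x ∈ s, ∀ y ∈ t, ε ≤ f x y) ∨ (∀ x ∈ s, ∀ y ∈ t, f x y ≤ -ε) := by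
  rcases le_or_gt 0 a with ha₀ | ha₀
  · rw [abs_of_nonneg ha₀] at ha
    exact Or.inl fun x hx y hy => by linarith [(abs_le.mp (hf x hx y hy)).1]
  · rw [abs_of_neg ha₀] at ha
    exact Or.inr fun x hx y hy => by linarith [(abs_le.mp (hf x hx y hy)).2]

theorem exists_three_le_and_le_half_rpow {δ : ℝ} (hδ : 0 < δ) (N : ℝ) :
    ∃ A : ℝ, 3 ≤ A ∧ N ≤ (A / 2) ^ δ := by
  have hgrow : Tendsto (fun A : ℝ => (A / 2) ^ δ) atTop atTop :=
    (tendsto_rpow_atTop hδ).comp (tendsto_id.atTop_div_const two_pos)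
  exact ((eventually_ge_atTop 3).and (hgrow.eventually_ge_atTop N)).exists

theorem nondegenerate_companion_ball_general {d : ℕ}
    (K : Ed d → Ed d → ℝ) (CK δ c₀ C₀ : ℝ)
    (hK : IsStandardKernel K CK δ)
    (hnd : IsNonDegenerate K c₀ C₀) :
    ∃ A₁ A₂ : ℝ, 3 ≤ A₁ ∧ A₁ ≤ A₂ ∧ ∃ c > (0:ℝ),
      ∀ (x₀ : Ed d) (r : ℝ), 0 < r → ∃ y₀ : Ed d,
        A₁ * r ≤ dist x₀ y₀ ∧ dist x₀ y₀ ≤ A₂ * r ∧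
        ((∀ x ∈ ball x₀ r, ∀ y ∈ ball y₀ r, c / r ^ d ≤ K x y) ∨
         (∀ x ∈ ball x₀ r, ∀ y ∈ ball y₀ r, K x y ≤ -(c / r ^ d))) := by
  obtain ⟨hc₀, -, hnd⟩ := hnd
  set CK' := max CK 0
  have hK' : IsStandardKernel K CK' δ := hK.mono (le_max_left CK 0)
  obtain ⟨A, hA3, hAδ⟩ := exists_three_le_and_le_half_rpow hK.1 (2 ^ (d + 2) * c₀ * CK')
  have hA : 0 < A := by linarith
  refine ⟨A, A * max C₀ 1, hA3, le_mul_of_one_le_right hA.le (le_max_right _ _),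
    1 / (2 * c₀ * A ^ d), by positivity, fun x₀ r hr => ?_⟩
  obtain ⟨y₀, hnear, hfar, hlarge⟩ := hnd x₀ (A * r) (by positivity)
  have hosc : ∀ x ∈ ball x₀ r, ∀ y ∈ ball y₀ r,
      |K x y - K x₀ y₀| ≤ 1 / (2 * c₀ * A ^ d) / r ^ d := by
    intro x hx y hy
    calc |K x y - K x₀ y₀| ≤ 2 ^ (d + 1) * CK' / (A / 2) ^ δ / (A * r) ^ d :=
          hK'.abs_sub_le_of_mem_ball (le_max_right CK 0) hr hA3 hnear hx hy
      _ ≤ 1 / (2 * c₀) / (A * r) ^ d := by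
          gcongr ?_ / _
          rw [div_le_div_iff₀ (by positivity) (by positivity), pow_succ]
          linarith [show (2:ℝ) ^ d * 2 * CK' * (2 * c₀) = 2 ^ (d + 2) * c₀ * CK' by ring]
      _ = 1 / (2 * c₀ * A ^ d) / r ^ d := by rw [mul_pow]; field_simp
  have hfar' : dist x₀ y₀ ≤ A * max C₀ 1 * r :=
    hfar.trans (by nlinarith [le_max_left C₀ 1, mul_pos hA hr])
  refine ⟨y₀, hnear, hfar', le_or_le_neg_of_abs_sub_le ?_ hosc⟩
  calc 2 * (1 / (2 * c₀ * A ^ d) / r ^ d) = 1 / (c₀ * (A * r) ^ d) := by field_simp; ring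
    _ ≤ |K x₀ y₀| := hlarge

/-- A non-degenerate CZ kernel admits, for every ball B(x₀,r), a companion ball
B(y₀,r) at distance ≍ r on which K has constant sign and size ≳ r^(−d). -/
theorem nondegenerate_companion_ball {d : ℕ} (hd : 0 < d)
    (T : (Ed d → ℝ) → (Ed d → ℝ)) (K : Ed d → Ed d → ℝ) (CK δ c₀ C₀ : ℝ)
    (hT : IsCZOperator T K) (hK : IsStandardKernel K CK δ)
    (hnd : IsNonDegenerate K c₀ C₀) :
    ∃ A₁ A₂ : ℝ, 3 ≤ A₁ ∧ A₁ ≤ A₂ ∧ ∃ c > (0:ℝ),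
      ∀ (x₀ : Ed d) (r : ℝ), 0 < r → ∃ y₀ : Ed d,
        A₁ * r ≤ dist x₀ y₀ ∧ dist x₀ y₀ ≤ A₂ * r ∧
        ((∀ x ∈ ball x₀ r, ∀ y ∈ ball y₀ r, c / r ^ d ≤ K x y) ∨
         (∀ x ∈ ball x₀ r, ∀ y ∈ ball y₀ r, K x y ≤ -(c / r ^ d))) :=
  nondegenerate_companion_ball_general K CK δ c₀ C₀ hK hnd
end
end
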